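/- For every n ≥ 4 and every k ≥ 0, dim_ℂ (K_n)_k = C(n,4) and dim_ℂ (𝔅_n')_k = Σ_{s=2}^{n−1} C(s,2)·C(n−s+k, n−s); equivalently, Hilb(K_n, t) = C(n,4)/(1−t) and Hilb(𝔅_n', t) = Σ_{s=2}^{n−1} C(s,2)/(1−t)^{n−s+1}. -/

import Mathlib

/-!
In `Kₙ` every variable other than `x_{ij}` kills `e_{ijkl}`, so `(Kₙ)_d` has the basis
`x_{ij}^d e_{ijkl}`.

In `𝔅ₙ'` the relations `B ∪ E` kill `x_{st} r_{ijk}` when `s ∉ {i, j}` and `x_{il} r_{ijk}` when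
`l > j`, and they give `x_{il} r_{ijk} = -x_{jl} r_{ijk}` for `l < j` and
`x_{jl} r_{ijk} = x_{jk} r_{ijl}`. By induction on the degree, `(𝔅ₙ')_d` is therefore spanned by
the normal forms `x^m r_{ijk}`, `m` a monomial of degree `d` in `x_{ij}` and the `x_{jl}` with
`k ≤ l < j`. These are linearly independent: sending `r_{ijk}` to `x_{jk} e_{ij}` and then, on
the `e_{ij}` coordinate, substituting `x_{il} ↦ -x_{jl}` for `l < j`, keeping `x_{ij}` and the
`x_{jl}` and killing every other variable, annihilates `B ∪ E` and maps `x^m r_{ijk}` to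
`x_{jk} x^m e_{ij}`, from which `k` is read off as the least `l` with `x_{jl}` occurring.
Each triple `(i, j, k)` has `C(j - k + d, d)` normal forms of degree `d`, and `C(s, 2)` triples
have `j - k = n - s`.
-/

/-- Index set for the variables `x_{ij}` (`1 ≤ j < i ≤ n`, `0`-indexed). -/
abbrev PIdx (n : ℕ) := { p : Fin n × Fin n // p.2 < p.1 }

/-- The polynomial ring `S = ℂ[x_{ij} : j < i]`. -/
abbrev Sn (n : ℕ) := MvPolynomial (PIdx n) ℂ

/-- Index set for the basis `r_{ijk}` (`k < j < i`). -/
abbrev TIdx (n : ℕ) := { t : Fin n × Fin n × Fin n // t.2.2 < t.2.1 ∧ t.2.1 < t.1 }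

/-- The free `S`-module `F` with basis `{r_{ijk} : k < j < i}`. -/
abbrev Fn (n : ℕ) := TIdx n → Sn n

/-- The variable `x_{ij}` (for `j < i`). -/
noncomputable def Xv (n : ℕ) (i j : Fin n) (h : j < i) : Sn n := MvPolynomial.X ⟨(i, j), h⟩

/-- The basis element `r_{ijk}` of `F` (for `k < j < i`). -/
noncomputable def rGen (n : ℕ) (i j k : Fin n) (h1 : k < j) (h2 : j < i) : Fn n :=
  Pi.single ⟨(i, j, k), h1, h2⟩ 1

/-- The generating set `B = ∪ B_{ijk}` of relations (`g₁,…,g₄, h₁,…,h₈` of the paper):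
for each `k < j < i` and admissible `l₁ < k < l₂ < j < l₃ < i < l₄` and pairs `t < s`
with `{s,t} ∩ {i,j,k} = ∅`. -/
noncomputable def BSet (n : ℕ) : Set (Fn n) :=
  { w | ∃ (i j k : Fin n) (hkj : k < j) (hji : j < i),
    -- g₁
    (∃ (l : Fin n) (h1 : k < l) (h2 : l < j),
      w = (-Xv n j k hkj - Xv n l k h1) • rGen n i j l h2 hji
          + Xv n j l h2 • rGen n i j k hkj hji) ∨
    -- g₂
    (∃ (l : Fin n) (_h1 : k < l) (h2 : l < j),
      w = Xv n j k hkj • rGen n i j l h2 hji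
          + Xv n i l (h2.trans hji) • rGen n i j k hkj hji) ∨
    -- g₃
    (∃ (l : Fin n) (h1 : j < l) (h2 : l < i),
      w = -(Xv n j k hkj • rGen n i l j h1 h2)
          + Xv n i l h2 • rGen n i j k hkj hji) ∨
    -- g₄
    (∃ (l : Fin n) (h1 : i < l),
      w = Xv n j k hkj • rGen n l i j hji h1
          + Xv n l i h1 • rGen n i j k hkj hji) ∨
    -- h₁
    (∃ (l : Fin n) (h1 : l < k),
      w = (Xv n i l (h1.trans (hkj.trans hji)) + Xv n j l (h1.trans hkj) + Xv n k l h1) •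
          rGen n i j k hkj hji) ∨
    -- h₂
    (w = (Xv n i k (hkj.trans hji) + Xv n j k hkj) • rGen n i j k hkj hji) ∨
    -- h₃
    (∃ (l : Fin n) (h1 : k < l) (_h2 : l < j), w = Xv n l k h1 • rGen n i j k hkj hji) ∨
    -- h₄
    (∃ (l : Fin n) (h1 : j < l) (_h2 : l < i),
      w = Xv n l k (hkj.trans h1) • rGen n i j k hkj hji) ∨
    -- h₅
    (∃ (l : Fin n) (h1 : j < l) (_h2 : l < i), w = Xv n l j h1 • rGen n i j k hkj hji) ∨
    -- h₆
    (∃ (l : Fin n) (h1 : i < l),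
      w = Xv n l k ((hkj.trans hji).trans h1) • rGen n i j k hkj hji) ∨
    -- h₇
    (∃ (l : Fin n) (h1 : i < l), w = Xv n l j (hji.trans h1) • rGen n i j k hkj hji) ∨
    -- h₈
    (∃ (s t : Fin n) (h : t < s), s ≠ i ∧ s ≠ j ∧ s ≠ k ∧ t ≠ i ∧ t ≠ j ∧ t ≠ k ∧
      w = Xv n s t h • rGen n i j k hkj hji) }

/-- The `S`-submodule of `F` spanned by `B`. -/
noncomputable def spanB (n : ℕ) : Submodule (Sn n) (Fn n) := Submodule.span (Sn n) (BSet n)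

/-- The infinitesimal Alexander invariant `𝔅ₙ = F / span_S(B)` of `PΣₙ⁺`. -/
abbrev Bn (n : ℕ) := Fn n ⧸ spanB n

/-- The extra monomial generators `E = { x_{kp}·r_{ijk} : p < k < j < i }`. -/
noncomputable def ESet (n : ℕ) : Set (Fn n) :=
  { w | ∃ (i j k : Fin n) (hkj : k < j) (hji : j < i) (p : Fin n) (hp : p < k),
      w = Xv n k p hp • rGen n i j k hkj hji }

/-- The `S`-submodule of `F` spanned by `B ∪ E`. -/
noncomputable def spanB' (n : ℕ) : Submodule (Sn n) (Fn n) :=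
  Submodule.span (Sn n) (BSet n ∪ ESet n)

/-- The quotient module `𝔅ₙ' = F / span_S(B ∪ E)`. -/
abbrev Bn' (n : ℕ) := Fn n ⧸ spanB' n

/-- Index set for the basis `e_{ijkl}` (`l < k < j < i`). -/
abbrev QIdx (n : ℕ) :=
  { q : Fin n × Fin n × Fin n × Fin n //
      q.2.2.2 < q.2.2.1 ∧ q.2.2.1 < q.2.1 ∧ q.2.1 < q.1 }

/-- The free `S`-module `F'` with basis `{e_{ijkl} : l < k < j < i}`. -/
abbrev F'n (n : ℕ) := QIdx n → Sn n

/-- The basis element `e_{ijkl}` of `F'`. -/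
noncomputable def eGen (n : ℕ) (i j k l : Fin n) (h1 : l < k) (h2 : k < j) (h3 : j < i) :
    F'n n :=
  Pi.single ⟨(i, j, k, l), h1, h2, h3⟩ 1

/-- The generating set `{ x_{st}·e_{ijkl} : t < s, (s,t) ≠ (i,j) }`. -/
noncomputable def JSet (n : ℕ) : Set (F'n n) :=
  { w | ∃ (i j k l : Fin n) (h1 : l < k) (h2 : k < j) (h3 : j < i)
      (s t : Fin n) (hts : t < s), (s, t) ≠ (i, j) ∧
      w = Xv n s t hts • eGen n i j k l h1 h2 h3 }

/-- The `S`-submodule of `F'` spanned by the set above. -/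
noncomputable def spanJ (n : ℕ) : Submodule (Sn n) (F'n n) := Submodule.span (Sn n) (JSet n)

/-- The module `Kₙ = F' / span_S{x_{st}·e_{ijkl} : (s,t) ≠ (i,j)}`. -/
abbrev Kn (n : ℕ) := F'n n ⧸ spanJ n

/-- The degree-`k` graded piece of the free module `F` (basis in degree `0`). -/
noncomputable def FnDeg (n k : ℕ) : Submodule ℂ (Fn n) :=
  Submodule.pi Set.univ fun _ => MvPolynomial.homogeneousSubmodule (PIdx n) ℂ k

/-- The degree-`k` graded piece of the free module `F'` (basis in degree `0`). -/
noncomputable def F'nDeg (n k : ℕ) : Submodule ℂ (F'n n) :=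
  Submodule.pi Set.univ fun _ => MvPolynomial.homogeneousSubmodule (PIdx n) ℂ k

/-- The degree-`k` graded piece of `𝔅ₙ'`. -/
noncomputable def Bn'Deg (n k : ℕ) : Submodule ℂ (Bn' n) :=
  Submodule.span ℂ ((Submodule.Quotient.mk : Fn n → Bn' n) '' (FnDeg n k))

/-- The degree-`k` graded piece of `Kₙ`. -/
noncomputable def KnDeg (n k : ℕ) : Submodule ℂ (Kn n) :=
  Submodule.span ℂ ((Submodule.Quotient.mk : F'n n → Kn n) '' (F'nDeg n k))

open MvPolynomial Finset

theorem LinearMap.map_eq_zero_of_mem_span_of_smul {A R M N : Type*} [Semiring A] [Semiring R]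
    [AddCommMonoid M] [Module A M] [Module R M] [AddCommMonoid N] [Module R N] (L : M →ₗ[R] N)
    {S : Set M} (hS : ∀ s ∈ S, L s = 0) (hsmul : ∀ (a : A) x, L x = 0 → L (a • x) = 0)
    {x : M} (hx : x ∈ Submodule.span A S) : L x = 0 := by
  induction hx using Submodule.span_induction with
  | mem s hs => exact hS s hs
  | zero => exact map_zero L
  | add x y _ _ hx hy => rw [map_add, hx, hy, add_zero]
  | smul a x _ hx => exact hsmul a x hx

theorem LinearIndependent.quotient_mk_of_comp {κ A R M N : Type*} [CommRing R] [CommRing A]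
    [Algebra R A] [AddCommGroup M] [Module A M] [Module R M] [IsScalarTower R A M]
    [AddCommGroup N] [Module R N] {P : Submodule A M} (L : M →ₗ[R] N) (hL : ∀ x ∈ P, L x = 0)
    {v : κ → M} (hv : LinearIndependent R (L ∘ v)) :
    LinearIndependent R fun c => (Submodule.Quotient.mk (v c) : M ⧸ P) :=
  LinearIndependent.of_comp ((P.restrictScalars R).liftQ L hL ∘ₗ
    (Submodule.Quotient.restrictScalarsEquiv R P).symm.toLinearMap) hv

theorem Finset.add_single_mem_finsuppAntidiag {ι : Type*} [DecidableEq ι] {s : Finset ι}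
    {m : ι →₀ ℕ} {d : ℕ} {b : ι} (hm : m ∈ s.finsuppAntidiag d) (hb : b ∈ s) :
    m + Finsupp.single b 1 ∈ s.finsuppAntidiag (d + 1) := by
  rw [mem_finsuppAntidiag'] at hm ⊢
  refine ⟨?_, Finsupp.support_add.trans (union_subset hm.2 ?_)⟩
  · rw [Finsupp.sum_add_index' (fun _ => rfl) fun _ _ _ => rfl, hm.1,
      Finsupp.sum_single_index rfl]
  · exact Finsupp.support_single_subset.trans (singleton_subset_iff.2 hb)

theorem Finset.mem_finsuppAntidiag_of_subset {ι : Type*} [DecidableEq ι] {s s' : Finset ι}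
    {m : ι →₀ ℕ} {d : ℕ} (hs : s ⊆ s') (hm : m ∈ s.finsuppAntidiag d) :
    m ∈ s'.finsuppAntidiag d := by
  rw [mem_finsuppAntidiag'] at hm ⊢
  exact ⟨hm.1, hm.2.trans hs⟩

section GradedQuotient

variable {σ ι R : Type*} [CommRing R] [DecidableEq ι]

noncomputable abbrev piHomogeneousSubmodule (σ ι R : Type*) [CommRing R] (d : ℕ) :
    Submodule R (ι → MvPolynomial σ R) :=
  Submodule.pi Set.univ fun _ => homogeneousSubmodule σ R d

theorem single_mem_piHomogeneousSubmodule {p : MvPolynomial σ R} {d : ℕ}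
    (hp : p.IsHomogeneous d) (i : ι) : Pi.single i p ∈ piHomogeneousSubmodule σ ι R d := by
  intro j _
  rcases eq_or_ne j i with rfl | hj
  · simpa
  · simp [Pi.single_eq_of_ne hj]

theorem piHomogeneousSubmodule_le_span [Finite ι] (d : ℕ) :
    piHomogeneousSubmodule σ ι R d ≤ Submodule.span R
      {f | ∃ i : ι, ∃ m : σ →₀ ℕ, m.degree = d ∧ Pi.single i (monomial m (1 : R)) = f} := by
  rw [piHomogeneousSubmodule, ← Submodule.iSup_map_single]
  refine iSup_le fun i => ?_
  rw [homogeneousSubmodule_eq_finsupp_supported, AddMonoidAlgebra.supported_eq_span_single,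
    Submodule.map_span_le]
  rintro _ ⟨m, hm, rfl⟩
  exact Submodule.subset_span ⟨i, m, hm, rfl⟩

theorem linearIndependent_single_monomial [Fintype ι] :
    LinearIndependent R fun x : Σ _ : ι, σ →₀ ℕ =>
      (Pi.single x.1 (monomial x.2 (1 : R)) : ι → MvPolynomial σ R) := by
  have h := (Pi.basis fun _ : ι => basisMonomials σ R).linearIndependent
  simp only [_root_.funext (Pi.basis_apply _), coe_basisMonomials] at h
  exact h

variable {P : Submodule (MvPolynomial σ R) (ι → MvPolynomial σ R)}

theorem X_smul_mk_single_monomial (b : σ) (i : ι) (m : σ →₀ ℕ) :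
    (X b : MvPolynomial σ R) • (Submodule.Quotient.mk (Pi.single i (monomial m 1)) : _ ⧸ P) =
      Submodule.Quotient.mk (Pi.single i (monomial (m + Finsupp.single b 1) 1)) := by
  rw [← Submodule.Quotient.mk_smul, ← Pi.single_smul, smul_eq_mul, X, monomial_mul, one_mul,
    add_comm]

theorem smul_mk_single_monomial_eq {a a' : MvPolynomial σ R} {i i' : ι}
    (h : a • Pi.single i 1 - a' • Pi.single i' 1 ∈ P) (m : σ →₀ ℕ) :
    a • (Submodule.Quotient.mk (Pi.single i (monomial m 1)) : _ ⧸ P) =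
      a' • Submodule.Quotient.mk (Pi.single i' (monomial m 1)) := by
  rw [← Submodule.Quotient.mk_smul, ← Submodule.Quotient.mk_smul, Submodule.Quotient.eq]
  convert P.smul_mem (monomial m 1) h using 1
  simp only [smul_sub, ← Pi.single_smul, smul_eq_mul, mul_one, mul_comm]

theorem smul_mk_single_monomial_eq_zero {a : MvPolynomial σ R} {i : ι}
    (h : a • Pi.single i 1 ∈ P) (m : σ →₀ ℕ) :
    a • (Submodule.Quotient.mk (Pi.single i (monomial m 1)) : _ ⧸ P) = 0 := by
  rw [smul_mk_single_monomial_eq (a' := 0) (i' := i) (by simpa using h) m, zero_smul]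

theorem span_mk_piHomogeneousSubmodule_le [Finite ι] {κ : ℕ → Type*}
    (v : ∀ d, κ d → (ι → MvPolynomial σ R) ⧸ P)
    (hv₀ : ∀ i : ι, Submodule.Quotient.mk (Pi.single i (1 : MvPolynomial σ R)) ∈
      Submodule.span R (Set.range (v 0)))
    (hvX : ∀ b d c, (X b : MvPolynomial σ R) • v d c ∈ Submodule.span R (Set.range (v (d + 1))))
    (d : ℕ) :
    Submodule.span R (Submodule.Quotient.mk '' (piHomogeneousSubmodule σ ι R d : Set _)) ≤
      Submodule.span R (Set.range (v d)) := by
  have hX : ∀ b d, ∀ w ∈ Submodule.span R (Set.range (v d)),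
      (X b : MvPolynomial σ R) • w ∈ Submodule.span R (Set.range (v (d + 1))) := by
    intro b d w hw
    induction hw using Submodule.span_induction with
    | mem w hw => obtain ⟨c, rfl⟩ := hw; exact hvX b d c
    | zero => simp
    | add w w' _ _ h h' => rw [smul_add]; exact add_mem h h'
    | smul a w _ h => rw [smul_comm]; exact Submodule.smul_mem _ a h
  have hmonomial : ∀ d (m : σ →₀ ℕ) (i : ι), m.degree = d →
      Submodule.Quotient.mk (Pi.single i (monomial m (1 : R))) ∈
        Submodule.span R (Set.range (v d)) := by
    intro d
    induction d with
    | zero =>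
      intro m i hm
      rw [(Finsupp.degree_eq_zero_iff m).1 hm, monomial_zero', C_1]
      exact hv₀ i
    | succ d ih =>
      intro m i hm
      obtain ⟨b, hb⟩ : m.support.Nonempty := by
        rw [Finsupp.support_nonempty_iff]
        rintro rfl
        simp at hm
      have hsplit : m - Finsupp.single b 1 + Finsupp.single b 1 = m :=
        tsub_add_cancel_of_le (Finsupp.single_le_iff.2 (Nat.one_le_iff_ne_zero.2
          (Finsupp.mem_support_iff.1 hb)))
      rw [← hsplit, ← X_smul_mk_single_monomial]
      refine hX b d _ (ih _ i ?_)
      rw [← hsplit, map_add, Finsupp.degree_single] at hm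
      omega
  rw [Submodule.span_le]
  rintro _ ⟨f, hf, rfl⟩
  refine (Submodule.span_le (p := (Submodule.span R (Set.range (v d))).comap
    (P.mkQ.restrictScalars R))).2 ?_ (piHomogeneousSubmodule_le_span d hf)
  rintro _ ⟨i, m, hm, rfl⟩
  exact hmonomial d m i hm

theorem rank_span_mk_piHomogeneousSubmodule [Nontrivial R] [Finite ι] {κ : ℕ → Type*}
    (v : ∀ d, κ d → (ι → MvPolynomial σ R) ⧸ P)
    (hv₀ : ∀ i : ι, Submodule.Quotient.mk (Pi.single i (1 : MvPolynomial σ R)) ∈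
      Submodule.span R (Set.range (v 0)))
    (hvX : ∀ b d c, (X b : MvPolynomial σ R) • v d c ∈ Submodule.span R (Set.range (v (d + 1))))
    (d : ℕ) [Fintype (κ d)]
    (hv : ∀ c, v d c ∈ Submodule.Quotient.mk '' (piHomogeneousSubmodule σ ι R d : Set _))
    (hli : LinearIndependent R (v d)) :
    Module.rank R (Submodule.span R
      (Submodule.Quotient.mk '' (piHomogeneousSubmodule σ ι R d : Set _) : Set (_ ⧸ P))) =
        Fintype.card (κ d) := by
  rw [le_antisymm (span_mk_piHomogeneousSubmodule_le v hv₀ hvX d)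
    (Submodule.span_mono (Set.range_subset_iff.2 hv)), rank_span hli]
  simpa using Cardinal.mk_range_eq_of_injective hli.injective

end GradedQuotient

section Counting

variable {n : ℕ}

def TIdx.equivSigma : TIdx n ≃ Σ i : Fin n, Σ j : Fin i, Fin j where
  toFun t := ⟨t.1.1, ⟨t.1.2.1, t.2.2⟩, ⟨t.1.2.2, t.2.1⟩⟩
  invFun x := ⟨(x.1, ⟨x.2.1, x.2.1.2.trans x.1.2⟩, ⟨x.2.2, (x.2.2.2.trans x.2.1.2).trans x.1.2⟩),
    x.2.2.2, x.2.1.2⟩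

def QIdx.equivSigma : QIdx n ≃ Σ t : TIdx n, Fin t.1.2.2 where
  toFun q := ⟨⟨(q.1.1, q.1.2.1, q.1.2.2.1), q.2.2.1, q.2.2.2⟩, ⟨q.1.2.2.2, q.2.1⟩⟩
  invFun x :=
    ⟨(x.1.1.1, x.1.1.2.1, x.1.1.2.2, ⟨x.2, x.2.2.trans x.1.1.2.2.2⟩), x.2.2, x.1.2.1, x.1.2.2⟩

theorem sum_TIdx_eq_sum_range {M : Type*} [AddCommMonoid M] (g : ℕ → ℕ → M) :
    ∑ t : TIdx n, g t.1.2.1 t.1.2.2 = ∑ i ∈ range n, ∑ j ∈ range i, ∑ k ∈ range j, g j k := by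
  rw [← TIdx.equivSigma.symm.sum_comp]
  simp only [Fintype.sum_sigma, TIdx.equivSigma, Equiv.coe_fn_symm_mk,
    Fin.sum_univ_eq_sum_range (g _), Fin.sum_univ_eq_sum_range (fun j => ∑ k ∈ range j, g j k),
    Fin.sum_univ_eq_sum_range (fun i => ∑ j ∈ range i, ∑ k ∈ range j, g j k)]

theorem card_QIdx_eq_sum_range :
    Fintype.card (QIdx n) = ∑ i ∈ range n, ∑ j ∈ range i, ∑ k ∈ range j, k := by
  rw [Fintype.card_congr QIdx.equivSigma, Fintype.card_sigma]
  simpa using sum_TIdx_eq_sum_range (n := n) fun _ k => k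

theorem sum_range_choose_eq_choose_succ (N r : ℕ) :
    ∑ m ∈ range N, m.choose r = N.choose (r + 1) := by
  induction N with
  | zero => simp
  | succ N ih => rw [sum_range_succ, ih, Nat.choose_succ_succ', add_comm]

theorem card_QIdx : Fintype.card (QIdx n) = n.choose 4 := by
  have hk : ∀ j, ∑ k ∈ range j, k = j.choose 2 := fun j => by
    simpa using sum_range_choose_eq_choose_succ j 1
  simp only [card_QIdx_eq_sum_range, hk, sum_range_choose_eq_choose_succ]

theorem sum_range_sum_range_choose_mul (h : ℕ → ℕ) (r N : ℕ) :
    ∑ i ∈ range N, ∑ c ∈ range i, (i - 1 - c).choose r * h c =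
      ∑ c ∈ range N, (N - 1 - c).choose (r + 1) * h c := by
  induction N with
  | zero => simp
  | succ N ih =>
    simp only [sum_range_succ _ N, ih, Nat.add_sub_cancel, Nat.sub_self, Nat.choose_zero_succ,
      zero_mul, add_zero, ← sum_add_distrib]
    refine sum_congr rfl fun c hc => ?_
    obtain ⟨e, rfl⟩ : ∃ e, N = c + e + 1 := ⟨N - c - 1, by simp at hc; omega⟩
    rw [show c + e + 1 - c = e + 1 by omega, show c + e + 1 - 1 - c = e by omega,
      Nat.choose_succ_succ', add_mul, add_comm]

theorem sum_TIdx_eq_sum_choose_mul (f : ℕ → ℕ) :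
    ∑ t : TIdx n, f (t.1.2.1 - t.1.2.2) = ∑ s ∈ Icc 2 (n - 1), s.choose 2 * f (n - s) := by
  -- the factor `choose 0 = 1` puts the inner sum in the shape of `sum_range_sum_range_choose_mul`
  have hinner : ∀ j, ∑ k ∈ range j, f (j - k) =
      ∑ c ∈ range j, (j - 1 - c).choose 0 * f (c + 1) := by
    intro j
    rw [← sum_range_reflect]
    exact sum_congr rfl fun k hk => by simp at hk; simp [show j - (j - 1 - k) = k + 1 by omega]
  have hreflect : ∑ c ∈ range n, (n - 1 - c).choose 2 * f (c + 1) =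
      ∑ s ∈ range n, s.choose 2 * f (n - s) := by
    rw [← sum_range_reflect fun s => s.choose 2 * f (n - s)]
    exact sum_congr rfl fun c hc => by simp at hc; rw [show n - (n - 1 - c) = c + 1 by omega]
  rw [sum_TIdx_eq_sum_range fun j k => f (j - k)]
  simp only [hinner, sum_range_sum_range_choose_mul, hreflect]
  refine (sum_subset (fun s hs => ?_) fun s hs hs' => ?_).symm
  · simp at hs ⊢
    omega
  · rw [Nat.choose_eq_zero_of_lt (by simp at hs hs'; omega), zero_mul]

end Counting

section Kn

variable {n : ℕ}

def QIdx.topPair (q : QIdx n) : PIdx n := ⟨(q.1.1, q.1.2.1), q.2.2.2⟩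

noncomputable def kFunctional (n : ℕ) : F'n n →ₗ[ℂ] (QIdx n → Sn n) :=
  LinearMap.pi fun q =>
    (aeval (Pi.single q.topPair (X q.topPair))).toLinearMap ∘ₗ LinearMap.proj q

theorem kFunctional_apply (f : F'n n) (q : QIdx n) :
    kFunctional n f q = aeval (Pi.single q.topPair (X q.topPair)) (f q) := rfl

theorem kFunctional_eq_zero_of_mem {x : F'n n} (hx : x ∈ spanJ n) : kFunctional n x = 0 := by
  refine LinearMap.map_eq_zero_of_mem_span_of_smul (A := Sn n) _ ?_ ?_ hx
  · rintro _ ⟨i, j, k, l, h1, h2, h3, s, t, hts, hne, rfl⟩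
    ext1 q
    rw [kFunctional_apply, Pi.smul_apply, eGen]
    rcases eq_or_ne q ⟨(i, j, k, l), h1, h2, h3⟩ with rfl | hq
    · simp [Xv, QIdx.topPair, Subtype.ext_iff, hne]
    · simp [Pi.single_eq_of_ne hq]
  · intro a x hx
    ext1 q
    rw [kFunctional_apply, Pi.smul_apply, smul_eq_mul, map_mul, ← kFunctional_apply, hx,
      Pi.zero_apply, mul_zero]

noncomputable def kBasis (n d : ℕ) (q : QIdx n) : Kn n :=
  Submodule.Quotient.mk (Pi.single q (monomial (Finsupp.single q.topPair d) 1))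

theorem X_smul_kBasis_mem (b : PIdx n) (d : ℕ) (q : QIdx n) :
    (X b : Sn n) • kBasis n d q ∈ Submodule.span ℂ (Set.range (kBasis n (d + 1))) := by
  rcases eq_or_ne b q.topPair with rfl | hb
  · rw [kBasis, X_smul_mk_single_monomial, ← Finsupp.single_add]
    exact Submodule.subset_span ⟨q, rfl⟩
  · rw [kBasis, smul_mk_single_monomial_eq_zero]
    · exact zero_mem _
    refine Submodule.subset_span ⟨_, _, _, _, q.2.1, q.2.2.1, q.2.2.2, b.1.1, b.1.2, b.2, ?_, rfl⟩
    exact fun h => hb (Subtype.ext h)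

theorem linearIndependent_kBasis (d : ℕ) : LinearIndependent ℂ (kBasis n d) := by
  refine LinearIndependent.quotient_mk_of_comp (kFunctional n)
    (fun x hx => kFunctional_eq_zero_of_mem hx) ?_
  have hinj : Function.Injective fun q : QIdx n => (⟨q, Finsupp.single q.topPair d⟩ :
      Σ _ : QIdx n, PIdx n →₀ ℕ) := fun q q' h => congrArg Sigma.fst h
  have hcomp : kFunctional n ∘
      (fun q : QIdx n => Pi.single q (monomial (Finsupp.single q.topPair d) 1)) =
        fun q : QIdx n => Pi.single q (monomial (Finsupp.single q.topPair d) 1) := by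
    ext q q' : 2
    rcases eq_or_ne q' q with rfl | hq
    · rw [Function.comp_apply, kFunctional_apply, Pi.single_eq_same, aeval_monomial,
        Finsupp.prod_single_index (by simp), Pi.single_eq_same, map_one, one_mul,
        X_pow_eq_monomial]
    · simp [kFunctional_apply, Pi.single_eq_of_ne hq]
  have hli := (linearIndependent_single_monomial (σ := PIdx n) (R := ℂ) (ι := QIdx n)).comp _ hinj
  rwa [hcomp]

theorem rank_KnDeg (d : ℕ) : Module.rank ℂ (KnDeg n d) = Fintype.card (QIdx n) := by
  refine rank_span_mk_piHomogeneousSubmodule (kBasis n) (fun q => ?_) X_smul_kBasis_mem d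
    (fun q => ⟨_, single_mem_piHomogeneousSubmodule (isHomogeneous_monomial _ ?_) q, rfl⟩)
    (linearIndependent_kBasis d)
  · exact Submodule.subset_span ⟨q, by simp [kBasis]⟩
  · simp

end Kn

section Bn

variable {n : ℕ}

def TIdx.topPair (t : TIdx n) : PIdx n := ⟨(t.1.1, t.1.2.1), t.2.2⟩

def TIdx.lowPair (t : TIdx n) : PIdx n := ⟨(t.1.2.1, t.1.2.2), t.2.1⟩

noncomputable def pairSubstVal (p q : PIdx n) : Sn n :=
  if q.1.1 = p.1.2 then X q
  else if q = p then X p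
  else if h : q.1.1 = p.1.1 ∧ q.1.2 < p.1.2 then -X ⟨(p.1.2, q.1.2), h.2⟩
  else 0

noncomputable def pairSubst (p : PIdx n) : Sn n →ₐ[ℂ] Sn n := aeval (pairSubstVal p)

theorem pairSubst_Xv_of_fst_eq {i j l : Fin n} (hji : j < i) {hlj : l < j} :
    pairSubst ⟨(i, j), hji⟩ (Xv n j l hlj) = Xv n j l hlj := by
  rw [Xv, pairSubst, aeval_X, pairSubstVal, if_pos rfl]

theorem pairSubst_X_self (p : PIdx n) : pairSubst p (X p) = X p := by
  rw [pairSubst, aeval_X, pairSubstVal, if_neg p.2.ne', if_pos rfl]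

theorem pairSubst_Xv_of_lt {i j l : Fin n} (hji : j < i) {hli : l < i} (hlj : l < j) :
    pairSubst ⟨(i, j), hji⟩ (Xv n i l hli) = -Xv n j l hlj := by
  have hne : (⟨(i, l), hli⟩ : PIdx n) ≠ ⟨(i, j), hji⟩ := fun h => hlj.ne (by simp_all)
  rw [Xv, pairSubst, aeval_X, pairSubstVal, if_neg hji.ne', if_neg hne, dif_pos ⟨rfl, hlj⟩]
  rfl

theorem pairSubst_Xv_of_gt {i j l : Fin n} (hji : j < i) {hli : l < i} (hjl : j < l) :
    pairSubst ⟨(i, j), hji⟩ (Xv n i l hli) = 0 := by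
  have hne : (⟨(i, l), hli⟩ : PIdx n) ≠ ⟨(i, j), hji⟩ := fun h => hjl.ne' (by simp_all)
  rw [Xv, pairSubst, aeval_X, pairSubstVal, if_neg hji.ne', if_neg hne,
    dif_neg fun h => (hjl.trans h.2).false]

theorem pairSubst_Xv_of_ne {i j s l : Fin n} (hji : j < i) {hls : l < s} (hsi : s ≠ i)
    (hsj : s ≠ j) : pairSubst ⟨(i, j), hji⟩ (Xv n s l hls) = 0 := by
  have hne : (⟨(s, l), hls⟩ : PIdx n) ≠ ⟨(i, j), hji⟩ := fun h => hsi (by simp_all)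
  rw [Xv, pairSubst, aeval_X, pairSubstVal, if_neg hsj, if_neg hne, dif_neg fun h => hsi h.1]

noncomputable def bFunctional (n : ℕ) : Fn n →ₗ[ℂ] (PIdx n → Sn n) :=
  LinearMap.pi fun p => ∑ t with t.topPair = p,
    LinearMap.mulLeft ℂ (X t.lowPair) ∘ₗ (pairSubst p).toLinearMap ∘ₗ LinearMap.proj t

theorem bFunctional_apply (f : Fn n) (p : PIdx n) :
    bFunctional n f p = ∑ t with t.topPair = p, X t.lowPair * pairSubst p (f t) := by
  simp [bFunctional]

theorem bFunctional_smul (a : Sn n) (f : Fn n) (p : PIdx n) :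
    bFunctional n (a • f) p = pairSubst p a * bFunctional n f p := by
  simp only [bFunctional_apply, mul_sum, Pi.smul_apply, smul_eq_mul, map_mul]
  exact sum_congr rfl fun _ _ => mul_left_comm _ _ _

theorem bFunctional_single (t : TIdx n) (a : Sn n) :
    bFunctional n (Pi.single t a) = Pi.single t.topPair (X t.lowPair * pairSubst t.topPair a) := by
  ext1 p
  rw [bFunctional_apply]
  rcases eq_or_ne t.topPair p with rfl | hp
  · rw [sum_eq_single_of_mem t (by simp) fun t' _ ht' => by simp [ht']]
    simp
  · rw [Pi.single_eq_of_ne hp.symm, sum_eq_zero]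
    intro t' ht'
    rw [Pi.single_eq_of_ne (by rintro rfl; simp_all), map_zero, mul_zero]

theorem bFunctional_smul_rGen (c : Sn n) (i j k : Fin n) (hkj : k < j) (hji : j < i) :
    bFunctional n (c • rGen n i j k hkj hji) =
      Pi.single ⟨(i, j), hji⟩ (Xv n j k hkj * pairSubst ⟨(i, j), hji⟩ c) := by
  rw [rGen, ← Pi.single_smul, smul_eq_mul, mul_one, bFunctional_single]
  rfl

theorem bFunctional_smul_rGen_eq_zero {c : Sn n} {i j k : Fin n} {hkj : k < j} {hji : j < i}
    (hc : pairSubst ⟨(i, j), hji⟩ c = 0) : bFunctional n (c • rGen n i j k hkj hji) = 0 := by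
  rw [bFunctional_smul_rGen, hc, mul_zero, Pi.single_zero]

theorem bFunctional_eq_zero_of_mem_BSet {w : Fn n} (hw : w ∈ BSet n) : bFunctional n w = 0 := by
  obtain ⟨i, j, k, hkj, hji, hw⟩ := hw
  rcases hw with ⟨l, h₁, h₂, rfl⟩ | ⟨l, h₁, h₂, rfl⟩ | ⟨l, h₁, h₂, rfl⟩ | ⟨l, h₁, rfl⟩ |
    ⟨l, h₁, rfl⟩ | rfl | ⟨l, h₁, h₂, rfl⟩ | ⟨l, h₁, h₂, rfl⟩ | ⟨l, h₁, h₂, rfl⟩ | ⟨l, h₁, rfl⟩ |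
    ⟨l, h₁, rfl⟩ | ⟨s, t, hts, hsi, hsj, -, -, -, -, rfl⟩
  · rw [map_add, bFunctional_smul_rGen, bFunctional_smul_rGen, ← Pi.single_add, map_sub,
      map_neg, pairSubst_Xv_of_fst_eq, pairSubst_Xv_of_fst_eq,
      pairSubst_Xv_of_ne hji (h₂.trans hji).ne h₂.ne, Pi.single_eq_zero_iff]
    ring
  · rw [map_add, bFunctional_smul_rGen, bFunctional_smul_rGen, ← Pi.single_add,
      pairSubst_Xv_of_fst_eq, pairSubst_Xv_of_lt hji h₂, Pi.single_eq_zero_iff]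
    ring
  · rw [map_add, map_neg, bFunctional_smul_rGen_eq_zero (pairSubst_Xv_of_ne h₂ hji.ne h₁.ne),
      bFunctional_smul_rGen_eq_zero (pairSubst_Xv_of_gt hji h₁), neg_zero, add_zero]
  · rw [map_add,
      bFunctional_smul_rGen_eq_zero (pairSubst_Xv_of_ne h₁ (hji.trans h₁).ne hji.ne),
      bFunctional_smul_rGen_eq_zero (pairSubst_Xv_of_ne hji h₁.ne' (hji.trans h₁).ne'),
      add_zero]
  · refine bFunctional_smul_rGen_eq_zero ?_
    rw [map_add, map_add, pairSubst_Xv_of_lt hji (h₁.trans hkj), pairSubst_Xv_of_fst_eq,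
      pairSubst_Xv_of_ne hji (hkj.trans hji).ne hkj.ne]
    ring
  · refine bFunctional_smul_rGen_eq_zero ?_
    rw [map_add, pairSubst_Xv_of_lt hji hkj, pairSubst_Xv_of_fst_eq]
    ring
  · exact bFunctional_smul_rGen_eq_zero (pairSubst_Xv_of_ne hji (h₂.trans hji).ne h₂.ne)
  · exact bFunctional_smul_rGen_eq_zero (pairSubst_Xv_of_ne hji h₂.ne h₁.ne')
  · exact bFunctional_smul_rGen_eq_zero (pairSubst_Xv_of_ne hji h₂.ne h₁.ne')
  · exact bFunctional_smul_rGen_eq_zero (pairSubst_Xv_of_ne hji h₁.ne' (hji.trans h₁).ne')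
  · exact bFunctional_smul_rGen_eq_zero (pairSubst_Xv_of_ne hji h₁.ne' (hji.trans h₁).ne')
  · exact bFunctional_smul_rGen_eq_zero (pairSubst_Xv_of_ne hji hsi hsj)

theorem bFunctional_eq_zero_of_mem {x : Fn n} (hx : x ∈ spanB' n) : bFunctional n x = 0 := by
  refine LinearMap.map_eq_zero_of_mem_span_of_smul (A := Sn n) _ ?_ ?_ hx
  · rintro w (hw | ⟨i, j, k, hkj, hji, p, hp, rfl⟩)
    · exact bFunctional_eq_zero_of_mem_BSet hw
    · exact bFunctional_smul_rGen_eq_zero (pairSubst_Xv_of_ne hji (hkj.trans hji).ne hkj.ne)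
  · intro a x hx
    ext1 p
    rw [bFunctional_smul, hx, Pi.zero_apply, mul_zero]

section Relations

variable {i j k : Fin n}

theorem E_mem_spanB' (hkj : k < j) (hji : j < i) {p : Fin n} (hpk : p < k) :
    Xv n k p hpk • rGen n i j k hkj hji ∈ spanB' n :=
  Submodule.subset_span (Or.inr ⟨i, j, k, hkj, hji, p, hpk, rfl⟩)

theorem Xv_smul_rGen_mem_of_ne (hkj : k < j) (hji : j < i) {s t : Fin n} (hts : t < s)
    (hsi : s ≠ i) (hsj : s ≠ j) : Xv n s t hts • rGen n i j k hkj hji ∈ spanB' n := by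
  rcases eq_or_ne s k with rfl | hsk
  · exact E_mem_spanB' hkj hji hts
  rcases eq_or_ne t i with rfl | hti
  · have hg : Xv n j k hkj • rGen n s t j hji hts + Xv n s t hts • rGen n t j k hkj hji ∈
        spanB' n := by
      refine Submodule.subset_span (Or.inl ⟨t, j, k, hkj, hji, ?_⟩)
      iterate 3 right
      exact Or.inl ⟨s, hts, rfl⟩
    simpa using sub_mem hg (E_mem_spanB' hji hts hkj)
  refine Submodule.subset_span (Or.inl ⟨i, j, k, hkj, hji, ?_⟩)
  rcases eq_or_ne t j with rfl | htj
  · rcases hsi.lt_or_gt with hsi | hsi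
    · iterate 8 right
      exact Or.inl ⟨s, hts, hsi, rfl⟩
    · iterate 10 right
      exact Or.inl ⟨s, hsi, rfl⟩
  rcases eq_or_ne t k with rfl | htk
  · rcases hsj.lt_or_gt with hsj | hsj
    · iterate 6 right
      exact Or.inl ⟨s, hts, hsj, rfl⟩
    rcases hsi.lt_or_gt with hsi | hsi
    · iterate 7 right
      exact Or.inl ⟨s, hsj, hsi, rfl⟩
    · iterate 9 right
      exact Or.inl ⟨s, hsi, rfl⟩
  iterate 11 right
  exact ⟨s, t, hts, hsi, hsj, hsk, hti, htj, htk, rfl⟩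

theorem Xv_smul_rGen_mem_of_gt (hkj : k < j) (hji : j < i) {l : Fin n} (hjl : j < l)
    (hli : l < i) : Xv n i l hli • rGen n i j k hkj hji ∈ spanB' n := by
  have hg : -(Xv n j k hkj • rGen n i l j hjl hli) + Xv n i l hli • rGen n i j k hkj hji ∈
      spanB' n := by
    refine Submodule.subset_span (Or.inl ⟨i, j, k, hkj, hji, ?_⟩)
    iterate 2 right
    exact Or.inl ⟨l, hjl, hli, rfl⟩
  simpa using add_mem hg (E_mem_spanB' hjl hli hkj)

theorem g₁_mem_spanB' (hkj : k < j) (hji : j < i) {l : Fin n} (hkl : k < l) (hlj : l < j) :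
    (-Xv n j k hkj - Xv n l k hkl) • rGen n i j l hlj hji + Xv n j l hlj • rGen n i j k hkj hji ∈
      spanB' n :=
  Submodule.subset_span (Or.inl ⟨i, j, k, hkj, hji, Or.inl ⟨l, hkl, hlj, rfl⟩⟩)

theorem Xv_smul_rGen_sub_Xv_smul_rGen_mem (hkj : k < j) (hji : j < i) {l : Fin n} (hlj : l < j) :
    Xv n j l hlj • rGen n i j k hkj hji - Xv n j k hkj • rGen n i j l hlj hji ∈ spanB' n := by
  rcases lt_trichotomy k l with hkl | rfl | hlk
  · convert add_mem (g₁_mem_spanB' hkj hji hkl hlj) (E_mem_spanB' hlj hji hkl) using 1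
    module
  · simp
  · convert neg_mem (add_mem (g₁_mem_spanB' hlj hji hlk hkj) (E_mem_spanB' hkj hji hlk))
      using 1
    module

theorem add_Xv_smul_rGen_mem (hkj : k < j) (hji : j < i) {l : Fin n} (hlj : l < j) :
    (Xv n i l (hlj.trans hji) + Xv n j l hlj) • rGen n i j k hkj hji ∈ spanB' n := by
  rcases lt_trichotomy l k with hlk | rfl | hkl
  · have hg : (Xv n i l (hlk.trans (hkj.trans hji)) + Xv n j l (hlk.trans hkj) + Xv n k l hlk) •
        rGen n i j k hkj hji ∈ spanB' n := by
      refine Submodule.subset_span (Or.inl ⟨i, j, k, hkj, hji, ?_⟩)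
      iterate 4 right
      exact Or.inl ⟨l, hlk, rfl⟩
    convert sub_mem hg (E_mem_spanB' hkj hji hlk) using 1
    module
  · refine Submodule.subset_span (Or.inl ⟨i, j, l, hkj, hji, ?_⟩)
    iterate 5 right
    exact Or.inl rfl
  · have hg₂ : Xv n j k hkj • rGen n i j l hlj hji +
        Xv n i l (hlj.trans hji) • rGen n i j k hkj hji ∈ spanB' n :=
      Submodule.subset_span (Or.inl ⟨i, j, k, hkj, hji, Or.inr (Or.inl ⟨l, hkl, hlj, rfl⟩)⟩)
    convert add_mem (add_mem (g₁_mem_spanB' hkj hji hkl hlj) hg₂)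
      (E_mem_spanB' hlj hji hkl) using 1
    module

end Relations

-- Irreducible: unification otherwise unfolds it when matching `finsuppAntidiag` memberships.
@[irreducible] def normalVars (t : TIdx n) : Finset (PIdx n) :=
  insert t.topPair (univ.filter fun q : PIdx n => q.1.1 = t.1.2.1 ∧ t.1.2.2 ≤ q.1.2)

theorem mem_normalVars {t : TIdx n} {q : PIdx n} :
    q ∈ normalVars t ↔ q = t.topPair ∨ q.1.1 = t.1.2.1 ∧ t.1.2.2 ≤ q.1.2 := by
  unfold normalVars
  simp

abbrev NormalIdx (n d : ℕ) := Σ t : TIdx n, (normalVars t).finsuppAntidiag d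

noncomputable def bBasis (n d : ℕ) (x : NormalIdx n d) : Bn' n :=
  Submodule.Quotient.mk (Pi.single x.1 (monomial x.2.1 1))

theorem Xv_smul_bBasis_mem_of_fst_eq {i j k l : Fin n} (hkj : k < j) (hji : j < i) (hlj : l < j)
    {d : ℕ} {m : PIdx n →₀ ℕ} (hm : m ∈ (normalVars ⟨(i, j, k), hkj, hji⟩).finsuppAntidiag d) :
    Xv n j l hlj • bBasis n d ⟨_, m, hm⟩ ∈ Submodule.span ℂ (Set.range (bBasis n (d + 1))) := by
  rcases le_or_gt k l with hkl | hlk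
  · have hm' := add_single_mem_finsuppAntidiag hm (b := ⟨(j, l), hlj⟩)
      (by simp [mem_normalVars, hkl])
    exact Submodule.subset_span ⟨⟨_, _, hm'⟩, (X_smul_mk_single_monomial _ _ _).symm⟩
  · have hsub : normalVars ⟨(i, j, k), hkj, hji⟩ ⊆ normalVars ⟨(i, j, l), hlj, hji⟩ := by
      intro q hq
      rw [mem_normalVars] at hq ⊢
      exact hq.imp (fun h => h) fun h => ⟨h.1, hlk.le.trans h.2⟩
    have hm' := add_single_mem_finsuppAntidiag (mem_finsuppAntidiag_of_subset hsub hm)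
      (b := ⟨(j, k), hkj⟩) (by simp [mem_normalVars, hlk.le])
    refine Submodule.subset_span ⟨⟨_, _, hm'⟩, ?_⟩
    rw [bBasis, bBasis, smul_mk_single_monomial_eq (Xv_smul_rGen_sub_Xv_smul_rGen_mem hkj hji hlj)]
    exact (X_smul_mk_single_monomial _ _ _).symm

theorem X_smul_bBasis_mem (b : PIdx n) (d : ℕ) (x : NormalIdx n d) :
    (X b : Sn n) • bBasis n d x ∈ Submodule.span ℂ (Set.range (bBasis n (d + 1))) := by
  obtain ⟨⟨⟨i, j, k⟩, hkj, hji⟩, m, hm⟩ := x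
  obtain ⟨⟨s, l⟩, hls⟩ := b
  change k < j at hkj
  change j < i at hji
  change l < s at hls
  change Xv n s l hls • (Submodule.Quotient.mk
    (Pi.single ⟨(i, j, k), hkj, hji⟩ (monomial m 1)) : Bn' n) ∈ _
  rcases eq_or_ne s j with rfl | hsj
  · exact Xv_smul_bBasis_mem_of_fst_eq hkj hji hls hm
  rcases eq_or_ne s i with rfl | hsi
  · rcases lt_trichotomy l j with hlj | rfl | hjl
    · have hconv : Xv n s l hls • rGen n s j k hkj hji - (-Xv n j l hlj) • rGen n s j k hkj hji ∈
          spanB' n := by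
        rw [neg_smul, sub_neg_eq_add, ← add_smul]
        exact add_Xv_smul_rGen_mem hkj hji hlj
      rw [smul_mk_single_monomial_eq hconv, neg_smul]
      exact neg_mem (Xv_smul_bBasis_mem_of_fst_eq hkj hji hlj hm)
    · have hm' := add_single_mem_finsuppAntidiag hm (b := ⟨(s, l), hls⟩)
        (mem_normalVars.2 (Or.inl rfl))
      exact Submodule.subset_span ⟨⟨_, _, hm'⟩, (X_smul_mk_single_monomial _ _ _).symm⟩
    · rw [smul_mk_single_monomial_eq_zero (Xv_smul_rGen_mem_of_gt hkj hji hjl hls)]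
      exact zero_mem _
  · rw [smul_mk_single_monomial_eq_zero (Xv_smul_rGen_mem_of_ne hkj hji hls hsi hsj)]
    exact zero_mem _

theorem pairSubst_X_of_mem_normalVars {t : TIdx n} {q : PIdx n} (hq : q ∈ normalVars t) :
    pairSubst t.topPair (X q) = X q := by
  rcases mem_normalVars.1 hq with rfl | ⟨hq, -⟩
  · exact pairSubst_X_self _
  · obtain ⟨⟨a, b⟩, hab⟩ := q
    obtain ⟨⟨i, j, k⟩, hkj, hji⟩ := t
    obtain rfl : a = j := hq
    exact pairSubst_Xv_of_fst_eq hji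

theorem bFunctional_single_monomial {t : TIdx n} {m : PIdx n →₀ ℕ} (hm : m.support ⊆ normalVars t) :
    bFunctional n (Pi.single t (monomial m 1)) =
      Pi.single t.topPair (monomial (m + Finsupp.single t.lowPair 1) 1) := by
  have hfix : pairSubst t.topPair (monomial m 1) = monomial m 1 := by
    rw [pairSubst, aeval_monomial, map_one, one_mul, monomial_eq, C_1, one_mul]
    exact Finsupp.prod_congr fun q hq => by
      rw [← aeval_X (R := ℂ) (pairSubstVal t.topPair) q, ← pairSubst,
        pairSubst_X_of_mem_normalVars (hm hq)]
  rw [bFunctional_single, hfix, X, monomial_mul, one_mul, add_comm]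

theorem le_of_mem_support_add_single {i j k k' : Fin n} (hkj : k < j) (hji : j < i)
    (hk'j : k' < j) {m : PIdx n →₀ ℕ} (hm : m.support ⊆ normalVars ⟨(i, j, k), hkj, hji⟩)
    (h : (m + Finsupp.single (⟨(j, k), hkj⟩ : PIdx n) 1 : PIdx n →₀ ℕ) ⟨(j, k'), hk'j⟩ ≠ 0) :
    k ≤ k' := by
  rcases eq_or_ne k k' with rfl | hne
  · exact le_rfl
  have hq : (⟨(j, k'), hk'j⟩ : PIdx n) ∈ m.support := by
    rw [Finsupp.mem_support_iff]
    simpa [Finsupp.single_apply, hne] using h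
  rcases mem_normalVars.1 (hm hq) with h | h
  · exact absurd (congrArg (fun q : PIdx n => q.1.1) h) hji.ne
  · exact h.2

theorem injective_topPair_add_single_lowPair (d : ℕ) :
    Function.Injective fun x : NormalIdx n d =>
      (⟨x.1.topPair, x.2.1 + Finsupp.single x.1.lowPair 1⟩ : Σ _ : PIdx n, PIdx n →₀ ℕ) := by
  rintro ⟨⟨⟨i, j, k⟩, hkj, hji⟩, m, hm⟩ ⟨⟨⟨i', j', k'⟩, hkj', hji'⟩, m', hm'⟩ h
  simp only [Sigma.mk.inj_iff, TIdx.topPair, TIdx.lowPair, Subtype.mk.injEq, Prod.mk.injEq] at h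
  obtain ⟨⟨rfl, rfl⟩, h⟩ := h
  have h := eq_of_heq h
  obtain rfl : k = k' := le_antisymm
    (le_of_mem_support_add_single hkj hji hkj' (mem_finsuppAntidiag'.1 hm).2
      (by rw [h]; simp))
    (le_of_mem_support_add_single hkj' hji hkj (mem_finsuppAntidiag'.1 hm').2
      (by rw [← h]; simp))
  exact Sigma.subtype_ext rfl (add_right_cancel h)

theorem linearIndependent_bBasis (d : ℕ) : LinearIndependent ℂ (bBasis n d) := by
  refine LinearIndependent.quotient_mk_of_comp (bFunctional n)
    (fun x hx => bFunctional_eq_zero_of_mem hx) ?_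
  have hcomp : bFunctional n ∘ (fun x : NormalIdx n d => Pi.single x.1 (monomial x.2.1 1)) =
      (fun y : Σ _ : PIdx n, PIdx n →₀ ℕ => Pi.single y.1 (monomial y.2 1)) ∘
        fun x : NormalIdx n d => ⟨x.1.topPair, x.2.1 + Finsupp.single x.1.lowPair 1⟩ :=
    funext fun x => bFunctional_single_monomial (mem_finsuppAntidiag'.1 x.2.2).2
  rw [hcomp]
  exact linearIndependent_single_monomial.comp _ (injective_topPair_add_single_lowPair d)

theorem rank_Bn'Deg (d : ℕ) : Module.rank ℂ (Bn'Deg n d) = Fintype.card (NormalIdx n d) := by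
  refine rank_span_mk_piHomogeneousSubmodule (bBasis n) (fun t => ?_) X_smul_bBasis_mem d
    (fun x => ⟨_, single_mem_piHomogeneousSubmodule
      (isHomogeneous_monomial _ (mem_finsuppAntidiag'.1 x.2.2).1) x.1, rfl⟩)
    (linearIndependent_bBasis d)
  refine Submodule.subset_span ⟨⟨t, 0, by simp⟩, ?_⟩
  simp [bBasis]

theorem card_normalVars (t : TIdx n) : #(normalVars t) = (t.1.2.1 : ℕ) - t.1.2.2 + 1 := by
  obtain ⟨⟨i, j, k⟩, hkj, hji⟩ := t
  unfold normalVars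
  rw [card_insert_of_notMem (by simp [TIdx.topPair, hji.ne']), ← Fin.card_Ico]
  congr 1
  refine card_nbij (fun q => q.1.2) (fun q hq => ?_) (fun q hq q' hq' h => ?_)
    fun l hl => ?_
  · simp only [coe_filter, mem_univ, true_and] at hq
    simp only [coe_Ico, Set.mem_Ico]
    exact ⟨hq.2, hq.1 ▸ q.2⟩
  · simp only [coe_filter, mem_univ, true_and] at hq hq'
    exact Subtype.ext (Prod.ext (hq.1.trans hq'.1.symm) h)
  · simp only [coe_Ico, Set.mem_Ico] at hl
    exact ⟨⟨(j, l), hl.2⟩, by simp [hl.1], rfl⟩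

theorem card_NormalIdx (d : ℕ) : Fintype.card (NormalIdx n d) =
    ∑ s ∈ Icc 2 (n - 1), s.choose 2 * (n - s + d).choose (n - s) := by
  rw [Fintype.card_sigma]
  have hcard : ∀ t : TIdx n, #((normalVars t).finsuppAntidiag d) =
      ((t.1.2.1 : ℕ) - t.1.2.2 + d).choose d := fun t => by
    rw [card_finsuppAntidiag_nat_eq_choose, card_normalVars, add_right_comm,
      Nat.add_sub_cancel]
  simp only [Fintype.card_coe, hcard, sum_TIdx_eq_sum_choose_mul fun g => (g + d).choose d,
    Nat.choose_symm_add]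

end Bn

theorem hilbert_series_Kn_Bn'_general (n : ℕ) :
    (∀ k : ℕ, Module.rank ℂ (KnDeg n k) = ((n.choose 4 : ℕ) : Cardinal)) ∧
    (∀ k : ℕ, Module.rank ℂ (Bn'Deg n k) =
      ((∑ s ∈ Finset.Icc 2 (n - 1), s.choose 2 * (n - s + k).choose (n - s) : ℕ) :
        Cardinal)) :=
  ⟨fun k => by rw [rank_KnDeg, card_QIdx], fun k => by rw [rank_Bn'Deg, card_NormalIdx]⟩

/-- `Hilb(Kₙ,t) = C(n,4)/(1−t)` and `Hilb(𝔅ₙ',t) = ∑_{s=2}^{n-1} C(s,2)/(1−t)^{n-s+1}`: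
for every `k ≥ 0`, `dim (Kₙ)_k = C(n,4)` and
`dim (𝔅ₙ')_k = ∑_{s=2}^{n-1} C(s,2)·C(n−s+k, n−s)`. -/
theorem hilbert_series_Kn_Bn' (n : ℕ) (hn : 4 ≤ n) :
    (∀ k : ℕ, Module.rank ℂ (KnDeg n k) = ((n.choose 4 : ℕ) : Cardinal)) ∧
    (∀ k : ℕ, Module.rank ℂ (Bn'Deg n k) =
      ((∑ s ∈ Finset.Icc 2 (n - 1), s.choose 2 * (n - s + k).choose (n - s) : ℕ) :
        Cardinal)) :=
  hilbert_series_Kn_Bn'_general n
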